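/- Let k ≥ 2 and let G = ⟨φ_1, …, φ_m⟩ be a semigroup generated by finitely many volume-preserving biholomorphisms of ℂ^k (holomorphic automorphisms of ℂ^k whose complex Jacobian determinant has modulus 1 at every point). Let Ω be a wandering Fatou component of G. Then there exists a sequence (φ_n) in G that diverges uniformly to infinity on compact subsets of Ω. -/

import Mathlib

/-!
Since the components wander, there are `ψₙ ∈ G` mapping `Ω` into pairwise distinct, hence
disjoint, Fatou components. Every element of `G` is a homeomorphism preserving Lebesgue measure:
a complex Jacobian of modulus one is a real Jacobian of absolute value one. If a subsequence of
`(ψₙ)` converged locally uniformly near a point of `Ω`, the images of a small ball would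
eventually be infinitely many pairwise disjoint sets of the same positive volume inside one
compact set, which is absurd. By normality, every subsequence therefore has a further subsequence
diverging to infinity near each point of `Ω`, so `(ψₙ)` itself diverges uniformly on compact
subsets of `Ω`.
-/

open Set Filter Metric Topology

noncomputable section

/-- `ℂ^k`. -/
abbrev Ck (k : ℕ) := Fin k → ℂ

/-- The semigroup (under composition) generated by a set `S` of self-maps. -/
inductive SemigroupGen {α : Type*} (S : Set (α → α)) : (α → α) → Prop
  | base {f : α → α} : f ∈ S → SemigroupGen S f
  | comp {f g : α → α} : SemigroupGen S f → SemigroupGen S g → SemigroupGen S (f ∘ g)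

/-- The semigroup generated by `S`, as a set of maps. -/
def GenSet {α : Type*} (S : Set (α → α)) : Set (α → α) := {f | SemigroupGen S f}

/-- A sequence of maps diverges uniformly to infinity on compact subsets of `U`. -/
def DivergesUniformlyOn {k : ℕ} (f : ℕ → Ck k → Ck k) (U : Set (Ck k)) : Prop :=
  ∀ K ⊆ U, IsCompact K → ∀ R > (0 : ℝ), ∀ᶠ n in atTop, ∀ z ∈ K, R < ‖f n z‖

/-- The Fatou set of a family `G` of self-maps of `ℂ^k`: points having an open
neighbourhood on which every sequence in `G` admits a subsequence that either converges
uniformly on compact subsets or diverges uniformly to infinity on compact subsets. -/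
def FatouSet {k : ℕ} (G : Set (Ck k → Ck k)) : Set (Ck k) :=
  {z | ∃ U : Set (Ck k), IsOpen U ∧ z ∈ U ∧
    ∀ f : ℕ → Ck k → Ck k, (∀ n, f n ∈ G) →
      ∃ s : ℕ → ℕ, StrictMono s ∧
        ((∃ g : Ck k → Ck k, TendstoLocallyUniformlyOn (fun n => f (s n)) g atTop U) ∨
          DivergesUniformlyOn (fun n => f (s n)) U)}

/-- The Julia set of a family `G`. -/
def JuliaSet {k : ℕ} (G : Set (Ck k → Ck k)) : Set (Ck k) := (FatouSet G)ᶜ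

/-- The complex Jacobian determinant of `f` at `z`. -/
def jacDet {k : ℕ} (f : Ck k → Ck k) (z : Ck k) : ℂ :=
  LinearMap.det ((fderiv ℂ f z).toLinearMap)

/-- `Ω` is a connected component of the Fatou set of `G`. -/
def IsFatouComponent {k : ℕ} (G : Set (Ck k → Ck k)) (Ω : Set (Ck k)) : Prop :=
  ∃ z ∈ FatouSet G, Ω = connectedComponentIn (FatouSet G) z

/-- The family `G` is locally uniformly bounded on `Ω`. -/
def LocUnifBounded {k : ℕ} (G : Set (Ck k → Ck k)) (Ω : Set (Ck k)) : Prop :=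
  ∀ z ∈ Ω, ∃ V ⊆ Ω, IsOpen V ∧ z ∈ V ∧ ∃ M > (0 : ℝ), ∀ f ∈ G, ∀ w ∈ V, ‖f w‖ < M

/-- The polynomial hull of a set `K ⊆ ℂ^k`. -/
def polyHull {k : ℕ} (K : Set (Ck k)) : Set (Ck k) :=
  {z | ∀ P : MvPolynomial (Fin k) ℂ,
    ‖MvPolynomial.eval z P‖ ≤ sSup ((fun w => ‖MvPolynomial.eval w P‖) '' K)}

/-- A Fatou component `Ω` of `G` is recurrent. -/
def Recurrent {k : ℕ} (G : Set (Ck k → Ck k)) (Ω : Set (Ck k)) : Prop :=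
  ∀ g : ℕ → Ck k → Ck k, (∀ j, g j ∈ G) →
    ∃ s : ℕ → ℕ, StrictMono s ∧ ∃ p ∈ Ω, ∃ p0 ∈ Ω,
      Tendsto (fun m => g (s m) p) atTop (𝓝 p0)

/-- A holomorphic automorphism of `ℂ^k`. -/
def IsHoloAut {k : ℕ} (f : Ck k → Ck k) : Prop :=
  Differentiable ℂ f ∧ ∃ g : Ck k → Ck k, Differentiable ℂ g ∧
    Function.LeftInverse g f ∧ Function.RightInverse g f

/-- An upper triangular polynomial automorphism of `ℂ^k`: the `j`-th coordinate is
`a j * z j + h j (z_1, …, z_{j-1})` with `a j ≠ 0` and `h j` a polynomial in the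
first `j - 1` variables. -/
def IsUpperTriangularAut {k : ℕ} (T : Ck k → Ck k) : Prop :=
  ∃ (a : Fin k → ℂ) (h : Fin k → MvPolynomial (Fin k) ℂ),
    (∀ j, a j ≠ 0) ∧ (∀ j, ∀ i ∈ (h j).vars, i < j) ∧
    ∀ z j, T z j = a j * z j + MvPolynomial.eval z (h j)

open MeasureTheory Function
open scoped ENNReal

theorem measurePreserving_of_bijective_of_norm_det_fderiv_eq_one
    {E : Type*} [NormedAddCommGroup E] [NormedSpace ℂ E] [FiniteDimensional ℂ E]
    [MeasurableSpace E] [BorelSpace E] (μ : Measure E) [μ.IsAddHaarMeasure]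
    {f : E → E} (hf : Differentiable ℂ f) (hbij : Bijective f)
    (hdet : ∀ z, ‖LinearMap.det (fderiv ℂ f z : E →ₗ[ℂ] E)‖ = 1) :
    MeasurePreserving f μ μ := by
  have hdetℝ : ∀ z, |((fderiv ℂ f z).restrictScalars ℝ).det| = 1 := fun z => by
    rw [ContinuousLinearMap.det, ContinuousLinearMap.coe_restrictScalars,
      LinearMap.det_restrictScalars, Algebra.norm_complex_apply, Complex.normSq_eq_norm_sq,
      hdet z]
    norm_num
  have himage : ∀ s, MeasurableSet s → μ (f '' s) = μ s := fun s hs => by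
    rw [← lintegral_abs_det_fderiv_eq_addHaar_image μ hs
      (fun z _ => ((hf z).hasFDerivAt.restrictScalars ℝ).hasFDerivWithinAt) hbij.injective.injOn]
    simp [hdetℝ]
  refine ⟨hf.continuous.measurable, Measure.ext fun A hA => ?_⟩
  rw [Measure.map_apply hf.continuous.measurable hA,
    ← himage _ (hA.preimage hf.continuous.measurable), image_preimage_eq A hbij.surjective]

theorem IsHoloAut.isOpenEmbedding {k : ℕ} {f : Ck k → Ck k} (hf : IsHoloAut f) :
    IsOpenEmbedding f := by
  obtain ⟨hfd, g, hgd, hgf, hfg⟩ := hf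
  exact (Homeomorph.mk ⟨f, g, hgf, hfg⟩ hfd.continuous hgd.continuous).isOpenEmbedding

theorem genSet_subset_of_comp_mem {α : Type*} {S T : Set (α → α)} (hST : S ⊆ T)
    (hT : ∀ f ∈ T, ∀ g ∈ T, f ∘ g ∈ T) : GenSet S ⊆ T := by
  intro f hf
  induction hf with
  | base hf => exact hST hf
  | comp _ _ ihf ihg => exact hT _ ihf _ ihg

theorem genSet_subset_isOpenEmbedding_measurePreserving {k m : ℕ} {φ : Fin m → Ck k → Ck k}
    (hvol : ∀ i, IsHoloAut (φ i) ∧ ∀ z, ‖jacDet (φ i) z‖ = 1) :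
    GenSet (range φ) ⊆
      {ψ | IsOpenEmbedding ψ ∧ MeasurePreserving ψ (volume : Measure (Ck k)) volume} := by
  refine genSet_subset_of_comp_mem ?_ fun f hf g hg => ⟨hf.1.comp hg.1, hf.2.comp hg.2⟩
  rintro _ ⟨i, rfl⟩
  obtain ⟨hφ, hjac⟩ := hvol i
  refine ⟨hφ.isOpenEmbedding, ?_⟩
  obtain ⟨hd, g, -, hgφ, hφg⟩ := hφ
  exact measurePreserving_of_bijective_of_norm_det_fderiv_eq_one volume hd
    ⟨hgφ.injective, hφg.surjective⟩ hjac

theorem measure_eq_top_of_pairwise_disjoint {α : Type*} [MeasurableSpace α] {μ : Measure α}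
    {A : ℕ → Set α} {B : Set α} {c : ℝ≥0∞} (hA : ∀ n, MeasurableSet (A n))
    (hdisj : Pairwise (Disjoint on A)) (hAB : ∀ n, A n ⊆ B) (hc : c ≠ 0)
    (hμA : ∀ n, μ (A n) = c) : μ B = ∞ :=
  top_le_iff.1 <| calc
    ∞ = ∑' n, μ (A n) := by simp only [hμA, ENNReal.tsum_const_eq_top_of_ne_zero hc]
    _ = μ (⋃ n, A n) := (measure_iUnion hdisj hA).symm
    _ ≤ μ B := measure_mono (iUnion_subset hAB)

theorem not_eventually_mapsTo_of_pairwise_disjoint_image {X Y : Type*}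
    [TopologicalSpace X] [MeasurableSpace X] {μ : Measure X} [μ.IsOpenPosMeasure]
    [TopologicalSpace Y] [MeasurableSpace Y] [OpensMeasurableSpace Y] {ν : Measure Y}
    [IsFiniteMeasureOnCompacts ν] {ψ : ℕ → X → Y}
    (hψ : ∀ n, IsOpenEmbedding (ψ n) ∧ MeasurePreserving (ψ n) μ ν)
    {W : Set X} (hW : IsOpen W) (hWne : W.Nonempty)
    (hdisj : Pairwise (Disjoint on fun n => ψ n '' W)) {L : Set Y} (hL : IsCompact L) :
    ¬ ∀ᶠ n in atTop, MapsTo (ψ n) W L := by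
  intro hmaps
  obtain ⟨N, hN⟩ := eventually_atTop.1 hmaps
  have hopen : ∀ n, IsOpen (ψ (n + N) '' W) := fun n => (hψ (n + N)).1.isOpenMap W hW
  refine (hL.measure_lt_top (μ := ν)).ne (measure_eq_top_of_pairwise_disjoint
    (fun n => (hopen n).measurableSet) (hdisj.comp_of_injective (add_left_injective N))
    (fun n => (hN (n + N) (Nat.le_add_left N n)).image_subset)
    (hW.measure_ne_zero μ hWne) fun n => ?_)
  rw [← (hψ (n + N)).2.measure_preimage (hopen n).measurableSet.nullMeasurableSet,
    preimage_image_eq W (hψ (n + N)).1.injective]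

theorem exists_isCompact_eventually_mapsTo_of_tendstoUniformlyOn {X Y ι : Type*}
    [TopologicalSpace X] [PseudoMetricSpace Y] [ProperSpace Y] {p : Filter ι} [p.NeBot]
    {F : ι → X → Y} {g : X → Y} {K : Set X} (hK : IsCompact K) (hF : ∀ i, ContinuousOn (F i) K)
    (h : TendstoUniformlyOn F g p K) : ∃ L, IsCompact L ∧ ∀ᶠ i in p, MapsTo (F i) K L := by
  have hg : IsCompact (g '' K) := hK.image_of_continuousOn (h.continuousOn (.of_forall hF))
  refine ⟨cthickening 1 (g '' K), hg.cthickening, ?_⟩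
  filter_upwards [Metric.tendstoUniformlyOn_iff.1 h 1 one_pos] with i hi x hx
  exact mem_cthickening_of_dist_le _ (g x) 1 _ (mem_image_of_mem g hx)
    (dist_comm (g x) _ ▸ (hi x hx).le)

theorem not_tendstoLocallyUniformlyOn_of_pairwise_disjoint_image {X Y : Type*}
    [TopologicalSpace X] [LocallyCompactSpace X] [MeasurableSpace X] {μ : Measure X}
    [μ.IsOpenPosMeasure] [PseudoMetricSpace Y] [ProperSpace Y] [MeasurableSpace Y]
    [OpensMeasurableSpace Y] {ν : Measure Y} [IsFiniteMeasureOnCompacts ν] {ψ : ℕ → X → Y}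
    (hψ : ∀ n, IsOpenEmbedding (ψ n) ∧ MeasurePreserving (ψ n) μ ν)
    {V : Set X} (hV : IsOpen V) (hdisj : Pairwise (Disjoint on fun n => ψ n '' V))
    {U : Set X} (hU : IsOpen U) (hUV : (U ∩ V).Nonempty) (g : X → Y) :
    ¬ TendstoLocallyUniformlyOn ψ g atTop U := by
  intro hconv
  obtain ⟨x, hx⟩ := hUV
  obtain ⟨K, hKx, hKUV, hK⟩ := local_compact_nhds ((hU.inter hV).mem_nhds hx)
  obtain ⟨L, hL, hmaps⟩ := exists_isCompact_eventually_mapsTo_of_tendstoUniformlyOn hK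
    (fun n => (hψ n).1.continuous.continuousOn)
    ((tendstoLocallyUniformlyOn_iff_forall_isCompact hU).1 hconv K
      (hKUV.trans inter_subset_left) hK)
  have hKV : interior K ⊆ V := interior_subset.trans (hKUV.trans inter_subset_right)
  exact not_eventually_mapsTo_of_pairwise_disjoint_image hψ isOpen_interior
    ⟨x, mem_interior_iff_mem_nhds.2 hKx⟩
    (fun i j hij => (hdisj hij).mono (image_mono hKV) (image_mono hKV)) hL
    (hmaps.mono fun n hn => hn.mono_left interior_subset)

theorem Filter.eventually_atTop_of_forall_strictMono_exists {P : ℕ → Prop}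
    (h : ∀ s : ℕ → ℕ, StrictMono s → ∃ n, P (s n)) : ∀ᶠ n in atTop, P n := by
  by_contra hP
  obtain ⟨s, hs, hsP⟩ := extraction_of_frequently_atTop (not_eventually.1 hP)
  obtain ⟨n, hn⟩ := h s hs
  exact hsP n hn

theorem isOpen_fatouSet {k : ℕ} (G : Set (Ck k → Ck k)) : IsOpen (FatouSet G) :=
  isOpen_iff_mem_nhds.2 fun _ ⟨U, hU, hzU, hfam⟩ =>
    mem_of_superset (hU.mem_nhds hzU) fun _ hw => ⟨U, hU, hw, hfam⟩

theorem IsFatouComponent.disjoint {k : ℕ} {G : Set (Ck k → Ck k)} {C D : Set (Ck k)}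
    (hC : IsFatouComponent G C) (hD : IsFatouComponent G D) (hCD : C ≠ D) : Disjoint C D := by
  obtain ⟨x, -, rfl⟩ := hC
  obtain ⟨y, -, rfl⟩ := hD
  refine not_not.1 fun h => hCD ?_
  obtain ⟨w, hwx, hwy⟩ := not_disjoint_iff.1 h
  rw [connectedComponentIn_eq hwx, connectedComponentIn_eq hwy]

theorem exists_seq_pairwise_disjoint_image_of_wandering {k : ℕ} {G : Set (Ck k → Ck k)}
    {Ω : Set (Ck k)}
    (hwand : {C : Set (Ck k) | IsFatouComponent G C ∧ ∃ ψ ∈ G, ψ '' Ω ⊆ C}.Infinite) :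
    ∃ ψ : ℕ → Ck k → Ck k, (∀ n, ψ n ∈ G) ∧ Pairwise (Disjoint on fun n => ψ n '' Ω) := by
  set C := hwand.natEmbedding
  choose ψ hψG hψC using fun n => (C n).2.2
  refine ⟨ψ, hψG, fun i j hij => ((C i).2.1.disjoint (C j).2.1 fun h => hij ?_).mono
    (hψC i) (hψC j)⟩
  exact C.injective (Subtype.ext h)

theorem eventually_lt_norm_of_mem_fatouSet {k : ℕ} {G : Set (Ck k → Ck k)}
    (hG : G ⊆ {ψ | IsOpenEmbedding ψ ∧ MeasurePreserving ψ (volume : Measure (Ck k)) volume})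
    {Ω : Set (Ck k)} (hΩ : IsOpen Ω) {ψ : ℕ → Ck k → Ck k} (hψG : ∀ n, ψ n ∈ G)
    (hdisj : Pairwise (Disjoint on fun n => ψ n '' Ω)) {z : Ck k} (hzΩ : z ∈ Ω)
    (hzF : z ∈ FatouSet G) {R : ℝ} (hR : 0 < R) :
    ∀ᶠ p in atTop ×ˢ 𝓝 z, R < ‖ψ p.1 p.2‖ := by
  obtain ⟨U, hU, hzU, hnormal⟩ := hzF
  obtain ⟨ρ, hρ, hρUΩ⟩ := nhds_basis_closedBall.mem_iff.1 ((hU.inter hΩ).mem_nhds ⟨hzU, hzΩ⟩)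
  suffices h : ∀ᶠ n in atTop, ∀ w ∈ closedBall z ρ, R < ‖ψ n w‖ from
    (h.prod_mk (closedBall_mem_nhds z hρ)).mono fun p hp => hp.1 p.2 hp.2
  refine eventually_atTop_of_forall_strictMono_exists fun s hs => ?_
  obtain ⟨t, ht, hconv | hdiv⟩ := hnormal (fun n => ψ (s n)) fun n => hψG (s n)
  · obtain ⟨g, hg⟩ := hconv
    exact (not_tendstoLocallyUniformlyOn_of_pairwise_disjoint_image (fun n => hG (hψG (s (t n))))
      hΩ (hdisj.comp_of_injective (hs.comp ht).injective) hU ⟨z, hzU, hzΩ⟩ g hg).elim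
  · obtain ⟨n, hn⟩ := (hdiv _ (hρUΩ.trans inter_subset_left) (isCompact_closedBall z ρ) R hR).exists
    exact ⟨t n, hn⟩

theorem divergesUniformlyOn_of_forall_eventually {k : ℕ} {f : ℕ → Ck k → Ck k} {Ω : Set (Ck k)}
    (h : ∀ z ∈ Ω, ∀ R > (0 : ℝ), ∀ᶠ p in atTop ×ˢ 𝓝 z, R < ‖f p.1 p.2‖) :
    DivergesUniformlyOn f Ω := fun K hKΩ hK R hR =>
  have hK : ∀ᶠ p in atTop ×ˢ 𝓝ˢ K, R < ‖f p.1 p.2‖ :=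
    hK.mem_prod_nhdsSet_of_forall fun z hz => h z (hKΩ hz) R hR
  hK.curry.mono fun _ hn => hn.self_of_nhdsSet

theorem stmt_19_general {k m : ℕ} (φ : Fin m → Ck k → Ck k)
    (hvol : ∀ i, IsHoloAut (φ i) ∧ ∀ z, ‖jacDet (φ i) z‖ = 1)
    (Ω : Set (Ck k)) (hΩ : IsFatouComponent (GenSet (Set.range φ)) Ω)
    (hwand : {C : Set (Ck k) | IsFatouComponent (GenSet (Set.range φ)) C ∧
        ∃ ψ ∈ GenSet (Set.range φ), ψ '' Ω ⊆ C}.Infinite) :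
    ∃ g : ℕ → Ck k → Ck k, (∀ j, g j ∈ GenSet (Set.range φ)) ∧
      DivergesUniformlyOn g Ω := by
  obtain ⟨z, -, rfl⟩ := hΩ
  obtain ⟨ψ, hψG, hdisj⟩ := exists_seq_pairwise_disjoint_image_of_wandering hwand
  refine ⟨ψ, hψG, divergesUniformlyOn_of_forall_eventually fun w hw R hR => ?_⟩
  exact eventually_lt_norm_of_mem_fatouSet (genSet_subset_isOpenEmbedding_measurePreserving hvol)
    (isOpen_fatouSet _).connectedComponentIn hψG hdisj hw (connectedComponentIn_subset _ _ hw) hR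

/-- If `Ω` is a wandering Fatou component of a semigroup generated by finitely many
volume-preserving biholomorphisms of `ℂ^k`, then some sequence in `G` diverges uniformly
to infinity on compact subsets of `Ω`. -/
theorem stmt_19 {k m : ℕ} (hk : 2 ≤ k) (φ : Fin m → Ck k → Ck k)
    (hvol : ∀ i, IsHoloAut (φ i) ∧ ∀ z, ‖jacDet (φ i) z‖ = 1)
    (Ω : Set (Ck k)) (hΩ : IsFatouComponent (GenSet (Set.range φ)) Ω)
    (hwand : {C : Set (Ck k) | IsFatouComponent (GenSet (Set.range φ)) C ∧
        ∃ ψ ∈ GenSet (Set.range φ), ψ '' Ω ⊆ C}.Infinite) :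
    ∃ g : ℕ → Ck k → Ck k, (∀ j, g j ∈ GenSet (Set.range φ)) ∧
      DivergesUniformlyOn g Ω :=
  stmt_19_general φ hvol Ω hΩ hwand
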